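/- Let 𝒜 = ℂ[E₁,E₂,A₀,A₁] with the derivations e, f, h defined below. Then, as ℂ-linear endomorphisms of 𝒜, they satisfy the 𝔰𝔩₂-relations [h,e] = 2e, [h,f] = −2f, [e,f] = h; so the skein lasagna module of B²×S² carries an 𝔰𝔩₂-action compatible with its algebra structure. -/
import Mathlib

open MvPolynomial

/-- The derivations `e, f, h` of `𝒜 = ℂ[E₁,E₂,A₀,A₁]` determined by
`e(E₁) = -2, e(E₂) = -E₁, e(A₀) = -A₁, e(A₁) = 0`;
`f(E₁) = E₁² - 2E₂, f(E₂) = E₁E₂, f(A₀) = (1/2)E₁A₀ - E₂A₁, f(A₁) = -(1/2)E₁A₁`;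
`h(E₁) = -2E₁, h(E₂) = -4E₂, h(A₀) = -A₀, h(A₁) = A₁`
satisfy `[h,e] = 2e`, `[h,f] = -2f`, `[e,f] = h` as linear endomorphisms of `𝒜`.
Here `E₁ = X 0`, `E₂ = X 1`, `A₀ = X 2`, `A₁ = X 3`. -/
theorem sl2_relations_on_lasagna_of_B2S2
    (e f h : Derivation ℂ (MvPolynomial (Fin 4) ℂ) (MvPolynomial (Fin 4) ℂ))
    (he1 : e (X 0) = -2) (he2 : e (X 1) = -X 0)
    (he3 : e (X 2) = -X 3) (he4 : e (X 3) = 0)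
    (hf1 : f (X 0) = X 0 ^ 2 - 2 * X 1) (hf2 : f (X 1) = X 0 * X 1)
    (hf3 : f (X 2) = (1 / 2 : ℂ) • (X 0 * X 2) - X 1 * X 3)
    (hf4 : f (X 3) = -((1 / 2 : ℂ) • (X 0 * X 3)))
    (hh1 : h (X 0) = -2 * X 0) (hh2 : h (X 1) = -4 * X 1)
    (hh3 : h (X 2) = -X 2) (hh4 : h (X 3) = X 3) :
    h.toLinearMap * e.toLinearMap - e.toLinearMap * h.toLinearMap = (2 : ℂ) • e.toLinearMap ∧
    h.toLinearMap * f.toLinearMap - f.toLinearMap * h.toLinearMap = (-2 : ℂ) • f.toLinearMap ∧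
    e.toLinearMap * f.toLinearMap - f.toLinearMap * e.toLinearMap = h.toLinearMap := by
  have hC : ∀ (D : Derivation ℂ (MvPolynomial (Fin 4) ℂ) (MvPolynomial (Fin 4) ℂ)) (a : ℂ),
      D (C a) = 0 := fun D a => by
    rw [← MvPolynomial.algebraMap_eq]; exact D.map_algebraMap a
  have h2 : ∀ (D : Derivation ℂ (MvPolynomial (Fin 4) ℂ) (MvPolynomial (Fin 4) ℂ)),
      D (2 : MvPolynomial (Fin 4) ℂ) = 0 := fun D => by
    rw [← map_ofNat (C : ℂ →+* MvPolynomial (Fin 4) ℂ) 2]; exact hC D _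
  have h4 : ∀ (D : Derivation ℂ (MvPolynomial (Fin 4) ℂ) (MvPolynomial (Fin 4) ℂ)),
      D (4 : MvPolynomial (Fin 4) ℂ) = 0 := fun D => by
    rw [← map_ofNat (C : ℂ →+* MvPolynomial (Fin 4) ℂ) 4]; exact hC D _
  have hc : (C ((1 : ℂ) / 2) : MvPolynomial (Fin 4) ℂ) * 2 = 1 := by
    rw [← map_ofNat (C : ℂ →+* MvPolynomial (Fin 4) ℂ) 2, ← map_mul]
    norm_num
  have key : ∀ (D1 D2 D3 : Derivation ℂ (MvPolynomial (Fin 4) ℂ) (MvPolynomial (Fin 4) ℂ)),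
      ⁅D1, D2⁆ = D3 →
      D1.toLinearMap * D2.toLinearMap - D2.toLinearMap * D1.toLinearMap = D3.toLinearMap := by
    intro D1 D2 D3 hD
    have h' := congrArg Derivation.toLinearMap hD
    rw [Derivation.commutator_coe_linear_map] at h'
    exact h'
  refine ⟨?_, ?_, ?_⟩
  · have hbr : ⁅h, e⁆ = (2 : ℂ) • e := by
      apply derivation_ext
      intro i
      fin_cases i
      · show ⁅h, e⁆ (X 0) = ((2 : ℂ) • e) (X 0)
        simp only [Derivation.commutator_apply, Derivation.smul_apply, he1, he2, he3, he4,
          hh1, hh2, hh3, hh4, Derivation.leibniz, smul_eq_mul, map_neg, map_sub, map_add,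
          h2, h4, smul_eq_C_mul, map_ofNat, map_zero]
        ring1
      · show ⁅h, e⁆ (X 1) = ((2 : ℂ) • e) (X 1)
        simp only [Derivation.commutator_apply, Derivation.smul_apply, he1, he2, he3, he4,
          hh1, hh2, hh3, hh4, Derivation.leibniz, smul_eq_mul, map_neg, map_sub, map_add,
          h2, h4, smul_eq_C_mul, map_ofNat, map_zero]
        ring1
      · show ⁅h, e⁆ (X 2) = ((2 : ℂ) • e) (X 2)
        simp only [Derivation.commutator_apply, Derivation.smul_apply, he1, he2, he3, he4,
          hh1, hh2, hh3, hh4, Derivation.leibniz, smul_eq_mul, map_neg, map_sub, map_add,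
          h2, h4, smul_eq_C_mul, map_ofNat, map_zero]
        ring1
      · show ⁅h, e⁆ (X 3) = ((2 : ℂ) • e) (X 3)
        simp only [Derivation.commutator_apply, Derivation.smul_apply, he1, he2, he3, he4,
          hh1, hh2, hh3, hh4, Derivation.leibniz, smul_eq_mul, map_neg, map_sub, map_add,
          h2, h4, smul_eq_C_mul, map_ofNat, map_zero]
        ring1
    simpa using key h e ((2 : ℂ) • e) hbr
  · have hbr : ⁅h, f⁆ = (-2 : ℂ) • f := by
      apply derivation_ext
      intro i
      fin_cases i
      · show ⁅h, f⁆ (X 0) = ((-2 : ℂ) • f) (X 0)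
        simp only [Derivation.commutator_apply, Derivation.smul_apply, hf1, hf2, hf3, hf4,
          hh1, hh2, hh3, hh4, Derivation.leibniz, Derivation.leibniz_pow, nsmul_eq_mul,
          smul_eq_mul, map_neg, map_sub, map_add, map_smul, h2, h4, hC,
          smul_eq_C_mul, map_ofNat, map_zero]
        ring1
      · show ⁅h, f⁆ (X 1) = ((-2 : ℂ) • f) (X 1)
        simp only [Derivation.commutator_apply, Derivation.smul_apply, hf1, hf2, hf3, hf4,
          hh1, hh2, hh3, hh4, Derivation.leibniz, Derivation.leibniz_pow, nsmul_eq_mul,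
          smul_eq_mul, map_neg, map_sub, map_add, map_smul, h2, h4, hC,
          smul_eq_C_mul, map_ofNat, map_zero]
        ring1
      · show ⁅h, f⁆ (X 2) = ((-2 : ℂ) • f) (X 2)
        simp only [Derivation.commutator_apply, Derivation.smul_apply, hf1, hf2, hf3, hf4,
          hh1, hh2, hh3, hh4, Derivation.leibniz, Derivation.leibniz_pow, nsmul_eq_mul,
          smul_eq_mul, map_neg, map_sub, map_add, map_smul, h2, h4, hC,
          smul_eq_C_mul, map_ofNat, map_zero]
        ring1
      · show ⁅h, f⁆ (X 3) = ((-2 : ℂ) • f) (X 3)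
        simp only [Derivation.commutator_apply, Derivation.smul_apply, hf1, hf2, hf3, hf4,
          hh1, hh2, hh3, hh4, Derivation.leibniz, Derivation.leibniz_pow, nsmul_eq_mul,
          smul_eq_mul, map_neg, map_sub, map_add, map_smul, h2, h4, hC,
          smul_eq_C_mul, map_ofNat, map_zero]
        ring1
    simpa using key h f ((-2 : ℂ) • f) hbr
  · have hbr : ⁅e, f⁆ = h := by
      apply derivation_ext
      intro i
      fin_cases i
      · show ⁅e, f⁆ (X 0) = h (X 0)
        simp only [Derivation.commutator_apply, he1, he2, he3, he4, hf1, hf2, hf3, hf4,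
          hh1, hh2, hh3, hh4, Derivation.leibniz, Derivation.leibniz_pow, nsmul_eq_mul,
          smul_eq_mul, map_neg, map_sub, map_add, map_smul, h2, h4, hC,
          smul_eq_C_mul, map_ofNat, map_zero]
        ring1
      · show ⁅e, f⁆ (X 1) = h (X 1)
        simp only [Derivation.commutator_apply, he1, he2, he3, he4, hf1, hf2, hf3, hf4,
          hh1, hh2, hh3, hh4, Derivation.leibniz, Derivation.leibniz_pow, nsmul_eq_mul,
          smul_eq_mul, map_neg, map_sub, map_add, map_smul, h2, h4, hC,
          smul_eq_C_mul, map_ofNat, map_zero]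
        ring1
      · show ⁅e, f⁆ (X 2) = h (X 2)
        simp only [Derivation.commutator_apply, he1, he2, he3, he4, hf1, hf2, hf3, hf4,
          hh1, hh2, hh3, hh4, Derivation.leibniz, Derivation.leibniz_pow, nsmul_eq_mul,
          smul_eq_mul, map_neg, map_sub, map_add, map_smul, h2, h4, hC,
          smul_eq_C_mul, map_ofNat, map_zero]
        linear_combination (-(X 0 * X 3 + X 2)) * hc
      · show ⁅e, f⁆ (X 3) = h (X 3)
        simp only [Derivation.commutator_apply, he1, he2, he3, he4, hf1, hf2, hf3, hf4,
          hh1, hh2, hh3, hh4, Derivation.leibniz, Derivation.leibniz_pow, nsmul_eq_mul,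
          smul_eq_mul, map_neg, map_sub, map_add, map_smul, h2, h4, hC,
          smul_eq_C_mul, map_ofNat, map_zero]
        linear_combination X 3 * hc
    exact key e f h hbr
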